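/- arXiv:2512.16662 — 3 statements merged into one kernel-verified Lean document; each statement's English description precedes it below -/
import Mathlib

section
/- If a PID satisfies the consistency equations, then for any collection of source subsets a₁,…,a_m, the redundancy I_∩(a₁,…,a_m;T) defined as the sum of atoms Π(f) over all parthood distributions f with f(a_i)=1 for all i, is symmetric under permutation of the arguments, satisfies self-redundancy I_∩(a;T)=I(a;T), and is invariant under removing an argument that is a superset of another argument. -/
open Finset
open scoped Classical

/-- A parthood distribution on `[n]`. -/
def IsParthood {n : ℕ} (f : Finset (Fin n) → Bool) : Prop :=
  f ∅ = false ∧ f Finset.univ = true ∧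
    ∀ ⦃a b : Finset (Fin n)⦄, a ⊆ b → f a = true → f b = true

/-- An antichain of subsets of `[n]`, excluding `{}` and `{∅}`. -/
def IsPIDAntichain {n : ℕ} (α : Finset (Finset (Fin n))) : Prop :=
  (∀ a ∈ α, ∀ b ∈ α, a ⊆ b → a = b) ∧ α ≠ ∅ ∧ α ≠ {∅}

/-- The antichain of minimal sets `a` with `f a = 1`. -/
def minAntichain {n : ℕ} (f : Finset (Fin n) → Bool) : Finset (Finset (Fin n)) :=
  Finset.univ.filter (fun a => f a = true ∧ ∀ b : Finset (Fin n), f b = true → b ⊆ a → b = a)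

/-- The function assigning `1` exactly to supersets of elements of `α`. -/
def toParthood {n : ℕ} (α : Finset (Finset (Fin n))) : Finset (Fin n) → Bool :=
  fun c => decide (∃ a ∈ α, a ⊆ c)

/-- The redundancy lattice order. -/
def rle {n : ℕ} (α β : Finset (Finset (Fin n))) : Prop :=
  ∀ b ∈ β, ∃ a ∈ α, a ⊆ b

/-- Redundant information as a sum of atoms over parthood distributions. -/
noncomputable def Icap {n : ℕ} (Pi : (Finset (Fin n) → Bool) → ℝ)
    (L : List (Finset (Fin n))) : ℝ :=
  ∑ f ∈ Finset.univ.filter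
      (fun f : Finset (Fin n) → Bool => IsParthood f ∧ ∀ a ∈ L, f a = true), Pi f

/-- Redundancy defined from a PID satisfying the consistency equations is symmetric,
satisfies self-redundancy, and is invariant under removing a superset argument. -/
theorem Icap_symm_selfred_superset {n : ℕ} (Pi : (Finset (Fin n) → Bool) → ℝ)
    (I : Finset (Fin n) → ℝ)
    (hcons : ∀ a : Finset (Fin n),
      I a = ∑ f ∈ Finset.univ.filter
        (fun f : Finset (Fin n) → Bool => IsParthood f ∧ f a = true), Pi f) :
    (∀ L₁ L₂ : List (Finset (Fin n)), L₁.Perm L₂ → Icap Pi L₁ = Icap Pi L₂) ∧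
    (∀ a : Finset (Fin n), Icap Pi [a] = I a) ∧
    (∀ (L : List (Finset (Fin n))) (a b : Finset (Fin n)), b ∈ L → b ⊆ a →
      Icap Pi (a :: L) = Icap Pi L) := by
  refine ⟨?_, ?_, ?_⟩
  · intro L₁ L₂ hperm
    unfold Icap
    apply Finset.sum_congr _ (fun _ _ => rfl)
    apply Finset.filter_congr
    intro f _
    constructor
    · rintro ⟨hf, h⟩; exact ⟨hf, fun a ha => h a (hperm.mem_iff.mpr ha)⟩
    · rintro ⟨hf, h⟩; exact ⟨hf, fun a ha => h a (hperm.mem_iff.mp ha)⟩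
  · intro a
    rw [hcons a]
    unfold Icap
    apply Finset.sum_congr _ (fun _ _ => rfl)
    apply Finset.filter_congr
    intro f _
    simp only [List.mem_singleton, forall_eq]
  · intro L a b hb hba
    unfold Icap
    apply Finset.sum_congr _ (fun _ _ => rfl)
    apply Finset.filter_congr
    intro f _
    simp only [List.mem_cons]
    constructor
    · rintro ⟨hf, h⟩
      exact ⟨hf, fun c hc => h c (Or.inr hc)⟩
    · rintro ⟨hf, h⟩
      refine ⟨hf, fun c hc => ?_⟩
      rcases hc with rfl | hc
      · exact hf.2.2 hba (h b hb)
      · exact h c hc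
end

section
/- For a PID with atoms Π indexed by antichains, the redundancy of an antichain α equals the sum of atoms over all antichains β with β ⪯ α in the redundancy lattice: I_∩(α;T) = Σ_{β ⪯ α} Π(β;T). -/
open Finset
open scoped Classical

lemma mem_minAntichain {n : ℕ} {f : Finset (Fin n) → Bool} {a : Finset (Fin n)} :
    a ∈ minAntichain f ↔ f a = true ∧ ∀ b : Finset (Fin n), f b = true → b ⊆ a → b = a := by
  simp [minAntichain]

lemma exists_min {n : ℕ} (f : Finset (Fin n) → Bool) :
    ∀ c : Finset (Fin n), f c = true → ∃ b ∈ minAntichain f, b ⊆ c := by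
  intro c
  induction c using Finset.strongInduction with
  | _ c ih =>
    intro hc
    by_cases h : ∀ b : Finset (Fin n), f b = true → b ⊆ c → b = c
    · exact ⟨c, mem_minAntichain.2 ⟨hc, h⟩, Finset.Subset.refl c⟩
    · push_neg at h
      obtain ⟨b, hb, hbc, hne⟩ := h
      obtain ⟨b', hb', hb'b⟩ := ih b (ssubset_of_subset_of_ne hbc hne) hb
      exact ⟨b', hb', hb'b.trans hbc⟩

lemma parthood_iff {n : ℕ} {f : Finset (Fin n) → Bool} (hf : IsParthood f)
    (c : Finset (Fin n)) : f c = true ↔ ∃ a ∈ minAntichain f, a ⊆ c := by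
  constructor
  · exact exists_min f c
  · rintro ⟨a, ha, hac⟩
    exact hf.2.2 hac (mem_minAntichain.1 ha).1

lemma toParthood_minAntichain {n : ℕ} {f : Finset (Fin n) → Bool} (hf : IsParthood f) :
    toParthood (minAntichain f) = f := by
  funext c
  simp only [toParthood]
  by_cases h : f c = true
  · simp [h, (parthood_iff hf c).1 h]
  · simp only [Bool.not_eq_true] at h
    rw [h, decide_eq_false]
    rintro ⟨a, ha, hac⟩
    have := (parthood_iff hf c).2 ⟨a, ha, hac⟩
    simp [this] at h

lemma minAntichain_toParthood {n : ℕ} {β : Finset (Finset (Fin n))}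
    (hβ : ∀ a ∈ β, ∀ b ∈ β, a ⊆ b → a = b) : minAntichain (toParthood β) = β := by
  ext c
  simp only [mem_minAntichain, toParthood, decide_eq_true_eq]
  constructor
  · rintro ⟨⟨a, ha, hac⟩, hmin⟩
    have := hmin a ⟨a, ha, Finset.Subset.refl a⟩ hac
    rwa [← this]
  · intro hc
    refine ⟨⟨c, hc, Finset.Subset.refl c⟩, ?_⟩
    rintro b ⟨a, ha, hab⟩ hbc
    have : a = c := hβ a ha c hc (hab.trans hbc)
    subst this
    exact Finset.Subset.antisymm hbc hab

lemma isParthood_toParthood {n : ℕ} {β : Finset (Finset (Fin n))}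
    (hβ : IsPIDAntichain β) : IsParthood (toParthood β) := by
  obtain ⟨hac, hne, hns⟩ := hβ
  refine ⟨?_, ?_, ?_⟩
  · rw [toParthood, decide_eq_false]
    rintro ⟨a, ha, ha0⟩
    have ha' : a = ∅ := Finset.subset_empty.1 ha0
    subst ha'
    apply hns
    apply Finset.Subset.antisymm
    · intro b hb
      have := hac ∅ ha b hb (Finset.empty_subset b)
      simp [← this]
    · simpa using ha
  · obtain ⟨a, ha⟩ := Finset.nonempty_iff_ne_empty.2 hne
    simp only [toParthood, decide_eq_true_eq]
    exact ⟨a, ha, Finset.subset_univ a⟩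
  · rintro a b hab ha
    simp only [toParthood, decide_eq_true_eq] at ha ⊢
    obtain ⟨x, hx, hxa⟩ := ha
    exact ⟨x, hx, hxa.trans hab⟩

/-- Redundancy of an antichain `α` equals the sum of atoms over all antichains
`β ⪯ α` in the redundancy lattice. -/
theorem redundancy_eq_downward_sum {n : ℕ} (Pi : Finset (Finset (Fin n)) → ℝ)
    (α : Finset (Finset (Fin n))) (hα : IsPIDAntichain α) :
    (∑ f ∈ Finset.univ.filter
        (fun f : Finset (Fin n) → Bool => IsParthood f ∧ ∀ a ∈ α, f a = true),
      Pi (minAntichain f))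
      = ∑ β ∈ Finset.univ.filter
          (fun β : Finset (Finset (Fin n)) => IsPIDAntichain β ∧ rle β α), Pi β := by
  refine Finset.sum_nbij' (i := minAntichain) (j := toParthood) ?_ ?_ ?_ ?_ ?_
  · intro f hf
    simp only [Finset.mem_filter, Finset.mem_univ, true_and] at hf ⊢
    obtain ⟨hpf, hfa⟩ := hf
    constructor
    · refine ⟨?_, ?_, ?_⟩
      · intro a ha b hb hab
        exact (mem_minAntichain.1 hb).2 a (mem_minAntichain.1 ha).1 hab
      · intro h
        obtain ⟨b, hb, -⟩ := exists_min f Finset.univ hpf.2.1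
        simp [h] at hb
      · intro h
        have : (∅ : Finset (Fin n)) ∈ minAntichain f := by rw [h]; simp
        have := (mem_minAntichain.1 this).1
        simp [hpf.1] at this
    · intro a ha
      exact exists_min f a (hfa a ha)
  · intro β hβ
    simp only [Finset.mem_filter, Finset.mem_univ, true_and] at hβ ⊢
    obtain ⟨hβa, hrle⟩ := hβ
    refine ⟨isParthood_toParthood hβa, ?_⟩
    intro a ha
    simp only [toParthood, decide_eq_true_eq]
    exact hrle a ha
  · intro f hf
    simp only [Finset.mem_filter, Finset.mem_univ, true_and] at hf
    exact toParthood_minAntichain hf.1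
  · intro β hβ
    simp only [Finset.mem_filter, Finset.mem_univ, true_and] at hβ
    exact minAntichain_toParthood hβ.1.1
  · intro f hf
    rfl
end

section
/- Under local positivity and the consistency equations for the XOR-Source-Copy gate profile, at least one pairwise redundancy I_∩({i},{j};T) with i ≠ j is strictly positive. -/
open Finset
open scoped Classical

lemma pid_antichain_no_empty {n : ℕ} {α : Finset (Finset (Fin n))}
    (hα : IsPIDAntichain α) : ∅ ∉ α := by
  intro h0
  obtain ⟨hac, _, hns⟩ := hα
  apply hns
  apply Finset.eq_singleton_iff_unique_mem.mpr
  exact ⟨h0, fun c hc => (hac ∅ h0 c hc (Finset.empty_subset c)).symm⟩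

/-- Under local positivity and the consistency equations for the XOR-Source-Copy gate
profile, at least one pairwise redundancy is strictly positive. -/
theorem xor_gate_positive_pairwise_redundancy (Pi : Finset (Finset (Fin 3)) → ℝ)
    (hpos : ∀ α : Finset (Finset (Fin 3)), 0 ≤ Pi α)
    (hcons : ∀ a : Finset (Fin 3), a ≠ ∅ →
      (∑ α ∈ Finset.univ.filter
          (fun α : Finset (Finset (Fin 3)) => IsPIDAntichain α ∧ ∃ b ∈ α, b ⊆ a), Pi α)
        = if a.card = 1 then 1 else 2) :
    ∃ i j : Fin 3, i ≠ j ∧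
      0 < ∑ α ∈ Finset.univ.filter
          (fun α : Finset (Finset (Fin 3)) => IsPIDAntichain α ∧ rle α {{i}, {j}}), Pi α := by
  by_contra h
  push_neg at h
  -- Pointwise vanishing on antichains containing two distinct singletons
  have hzero : ∀ (i j : Fin 3), i ≠ j → ∀ α : Finset (Finset (Fin 3)),
      IsPIDAntichain α → {i} ∈ α → {j} ∈ α → Pi α = 0 := by
    intro i j hij α hα hi hj
    have hsum := h i j hij
    have hnn : (0:ℝ) ≤ ∑ α ∈ Finset.univ.filter
        (fun α : Finset (Finset (Fin 3)) => IsPIDAntichain α ∧ rle α {{i}, {j}}), Pi α :=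
      Finset.sum_nonneg fun β _ => hpos β
    have hmem : α ∈ Finset.univ.filter
        (fun α : Finset (Finset (Fin 3)) => IsPIDAntichain α ∧ rle α {{i}, {j}}) := by
      simp only [Finset.mem_filter, Finset.mem_univ, true_and]
      refine ⟨hα, ?_⟩
      intro b hb
      simp only [Finset.mem_insert, Finset.mem_singleton] at hb
      rcases hb with rfl | rfl
      · exact ⟨{i}, hi, subset_rfl⟩
      · exact ⟨{j}, hj, subset_rfl⟩
    exact (Finset.sum_eq_zero_iff_of_nonneg (fun β _ => hpos β)).mp
      (le_antisymm hsum hnn) α hmem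
  -- the sets of antichains containing {i}
  set S : Fin 3 → Finset (Finset (Finset (Fin 3))) := fun i =>
    Finset.univ.filter (fun α : Finset (Finset (Fin 3)) => IsPIDAntichain α ∧ {i} ∈ α)
    with hSdef
  have hS : ∀ i : Fin 3, ∑ α ∈ S i, Pi α = 1 := by
    intro i
    have hne : ({i} : Finset (Fin 3)) ≠ ∅ := Finset.singleton_ne_empty i
    have := hcons {i} hne
    rw [Finset.card_singleton] at this
    simp only [if_true] at this
    rw [← this]
    apply Finset.sum_congr _ (fun _ _ => rfl)
    ext α
    simp only [hSdef, Finset.mem_filter, Finset.mem_univ, true_and]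
    constructor
    · rintro ⟨hα, hb⟩
      refine ⟨hα, {i}, hb, subset_rfl⟩
    · rintro ⟨hα, b, hb, hsub⟩
      refine ⟨hα, ?_⟩
      rcases Finset.subset_singleton_iff.mp hsub with rfl | rfl
      · exact absurd hb (pid_antichain_no_empty hα)
      · exact hb
  have hIz : ∀ (i j : Fin 3), i ≠ j → ∑ α ∈ S i ∩ S j, Pi α = 0 := by
    intro i j hij
    apply Finset.sum_eq_zero
    intro α hα
    simp only [hSdef, Finset.mem_inter, Finset.mem_filter, Finset.mem_univ, true_and] at hα
    exact hzero i j hij α hα.1.1 hα.1.2 hα.2.2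
  -- sum over union of the three sets is 3
  have h01 : ∑ α ∈ S 0 ∪ S 1, Pi α = 2 := by
    have := Finset.sum_union_inter (s₁ := S 0) (s₂ := S 1) (f := Pi)
    rw [hIz 0 1 (by decide), hS 0, hS 1] at this
    linarith
  have h012 : ∑ α ∈ (S 0 ∪ S 1) ∪ S 2, Pi α = 3 := by
    have hu := Finset.sum_union_inter (s₁ := S 0 ∪ S 1) (s₂ := S 2) (f := Pi)
    have hz : ∑ α ∈ (S 0 ∪ S 1) ∩ S 2, Pi α = 0 := by
      apply Finset.sum_eq_zero
      intro α hα
      rw [Finset.union_inter_distrib_right, Finset.mem_union] at hα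
      rcases hα with hα | hα
      · have := hIz 0 2 (by decide)
        exact (Finset.sum_eq_zero_iff_of_nonneg (fun β _ => hpos β)).mp this α hα
      · have := hIz 1 2 (by decide)
        exact (Finset.sum_eq_zero_iff_of_nonneg (fun β _ => hpos β)).mp this α hα
    rw [hz, h01, hS 2] at hu
    linarith
  -- but total mass is 2
  have hU := hcons Finset.univ (by simp [Finset.univ_nonempty.ne_empty])
  rw [show (Finset.univ : Finset (Fin 3)).card = 3 from rfl] at hU
  simp only [show (3:ℕ) ≠ 1 by decide, if_false] at hU
  have hsub : (S 0 ∪ S 1) ∪ S 2 ⊆ Finset.univ.filter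
      (fun α : Finset (Finset (Fin 3)) => IsPIDAntichain α ∧ ∃ b ∈ α, b ⊆ Finset.univ) := by
    intro α hα
    simp only [hSdef, Finset.mem_union, Finset.mem_filter, Finset.mem_univ, true_and] at hα ⊢
    rcases hα with (⟨hα, hm⟩ | ⟨hα, hm⟩) | ⟨hα, hm⟩ <;>
      exact ⟨hα, _, hm, Finset.subset_univ _⟩
  have hle := Finset.sum_le_sum_of_subset_of_nonneg hsub (fun β _ _ => hpos β)
  rw [h012, hU] at hle
  linarith
end
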